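/- arXiv:2308.04585 — 3 statements merged into one kernel-verified Lean document; each statement's English description precedes it below -/
import Mathlib

section
/- (SKPV closed form.) Fix stage-1 samples {(aᵢ, wᵢ, yᵢ)}_{i=1}^n, stage-2 samples {(ȧⱼ, ẏⱼ)}_{j=1}^m, and regularization parameters λ > 0, η > 0. Define the kernel matrices K_AA, K_YY, K_WW ∈ ℝ^{n×n}, K_AȦ, K_YẎ ∈ ℝ^{n×m}, K_ȦȦ ∈ ℝ^{m×m} from the samples, B = (K_AA ⊙ K_YY + nλI)^{-1}(K_AȦ ⊙ K_YẎ) ∈ ℝ^{n×m}, M = K_ȦȦ ⊙ (Bᵀ K_WW B) ∈ ℝ^{m×m}, and μ̂ⱼ = Σ_{i=1}^n B_{ij} φ_𝒲(wᵢ) ∈ H_𝒲. Then the unique minimizer over h ∈ H of the stage-2 objective (1/m) Σ_{j=1}^m (ẏⱼ − ⟨h, φ_𝒜(ȧⱼ) ⊗ μ̂ⱼ⟩_H)² + η ‖h‖²_H is ĥ = Σ_{j=1}^m αⱼ φ_𝒜(ȧⱼ) ⊗ μ̂ⱼ with α = (M + mηI)^{-1} ẏ, where ẏ = (ẏ₁,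 …, ẏ_m)ᵀ; consequently ĥ(a, w) := ⟨ĥ, φ_𝒜(a) ⊗ φ_𝒲(w)⟩_H = αᵀ (k_Ȧ(a) ⊙ (Bᵀ k_W(w))), where k_Ȧ(a) = (k_𝒜(ȧⱼ, a))ⱼ ∈ ℝ^m and k_W(w) = (k_𝒲(wᵢ, w))ᵢ ∈ ℝⁿ. -/
open scoped Matrix RealInnerProductSpace
open Matrix

/-- (SKPV closed form.) With stage-1 samples `(aᵢ, wᵢ, yᵢ)`, stage-2 samples
`(a'ⱼ, y'ⱼ)`, kernel matrices built from feature maps, `B = (K_AA ⊙ K_YY + nλI)⁻¹(K_AȦ ⊙ K_YẎ)`,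
`M = K_ȦȦ ⊙ (Bᵀ K_WW B)`, and `μ̂ⱼ = Σᵢ B_{ij} φ_𝒲(wᵢ)`, the unique minimizer over `h ∈ H` of
`(1/m) Σⱼ (y'ⱼ − ⟨h, φ_𝒜(a'ⱼ) ⊗ μ̂ⱼ⟩)² + η‖h‖²` is `ĥ = Σⱼ αⱼ φ_𝒜(a'ⱼ) ⊗ μ̂ⱼ` with
`α = (M + mηI)⁻¹ y'`; consequently `⟨ĥ, φ_𝒜(a) ⊗ φ_𝒲(w)⟩ = αᵀ (k_Ȧ(a) ⊙ (Bᵀ k_W(w)))`. -/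
theorem skpv_closed_form
    {𝒜 𝒲 HA HW H : Type*}
    [NormedAddCommGroup HA] [InnerProductSpace ℝ HA]
    [NormedAddCommGroup HW] [InnerProductSpace ℝ HW]
    [NormedAddCommGroup HY] [InnerProductSpace ℝ HY]
    [NormedAddCommGroup H] [InnerProductSpace ℝ H] [CompleteSpace H]
    (φA : 𝒜 → HA) (φW : 𝒲 → HW) (φY : ℝ → HY)
    -- H is (a model of) the Hilbert tensor product of HA and HW
    (tprod : HA →ₗ[ℝ] HW →ₗ[ℝ] H)
    (htprod : ∀ (u u' : HA) (v v' : HW), ⟪tprod u v, tprod u' v'⟫ = ⟪u, u'⟫ * ⟪v, v'⟫)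
    {n m : ℕ}
    -- stage-1 samples
    (a : Fin n → 𝒜) (w : Fin n → 𝒲) (y : Fin n → ℝ)
    -- stage-2 samples
    (a' : Fin m → 𝒜) (y' : Fin m → ℝ)
    (lam η : ℝ) (hlam : 0 < lam) (hη : 0 < η)
    -- kernel matrices
    (KAA KYY KWW : Matrix (Fin n) (Fin n) ℝ)
    (KAA' KYY' : Matrix (Fin n) (Fin m) ℝ) (KA'A' : Matrix (Fin m) (Fin m) ℝ)
    (hKAA : KAA = Matrix.of fun i j => ⟪φA (a i), φA (a j)⟫)
    (hKYY : KYY = Matrix.of fun i j => ⟪φY (y i), φY (y j)⟫)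
    (hKWW : KWW = Matrix.of fun i j => ⟪φW (w i), φW (w j)⟫)
    (hKAA' : KAA' = Matrix.of fun i j => ⟪φA (a i), φA (a' j)⟫)
    (hKYY' : KYY' = Matrix.of fun i j => ⟪φY (y i), φY (y' j)⟫)
    (hKA'A' : KA'A' = Matrix.of fun i j => ⟪φA (a' i), φA (a' j)⟫)
    (B : Matrix (Fin n) (Fin m) ℝ)
    (hB : B = (KAA ⊙ KYY + ((n : ℝ) * lam) • (1 : Matrix (Fin n) (Fin n) ℝ))⁻¹ * (KAA' ⊙ KYY'))
    (M : Matrix (Fin m) (Fin m) ℝ)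
    (hM : M = KA'A' ⊙ (Bᵀ * KWW * B))
    (μhat : Fin m → HW) (hμhat : μhat = fun j => ∑ i, B i j • φW (w i))
    -- stage-2 objective
    (L : H → ℝ)
    (hL : L = fun h =>
      (1 / (m : ℝ)) * (∑ j, (y' j - ⟪h, tprod (φA (a' j)) (μhat j)⟫) ^ 2) + η * ‖h‖ ^ 2)
    (α : Fin m → ℝ)
    (hα : α = (M + ((m : ℝ) * η) • (1 : Matrix (Fin m) (Fin m) ℝ))⁻¹ *ᵥ y')
    (hhat : H) (hhat_def : hhat = ∑ j, α j • tprod (φA (a' j)) (μhat j)) :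
    (∀ h : H, L hhat ≤ L h) ∧ (∀ h : H, L h = L hhat → h = hhat) ∧
      ∀ (a₀ : 𝒜) (w₀ : 𝒲),
        ⟪hhat, tprod (φA a₀) (φW w₀)⟫
          = α ⬝ᵥ fun j =>
              ⟪φA (a' j), φA a₀⟫ * (Bᵀ *ᵥ fun i => ⟪φW (w i), φW w₀⟫) j := by

  set ψ : Fin m → H := fun j => tprod (φA (a' j)) (μhat j) with hψdef
  -- Gram matrix of ψ is M
  have hμ : ∀ j k : Fin m, ⟪μhat j, μhat k⟫ = (Bᵀ * KWW * B) j k := by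
    intro j k
    have hR : (Bᵀ * KWW * B) j k = ∑ i, ∑ l, B i j * KWW i l * B l k := by
      simp only [Matrix.mul_apply, Matrix.transpose_apply, Finset.sum_mul]
      exact Finset.sum_comm
    rw [hμhat, hR]
    simp only [sum_inner, inner_sum, real_inner_smul_left, real_inner_smul_right]
    rw [Finset.sum_comm]
    refine Finset.sum_congr rfl fun i _ => Finset.sum_congr rfl fun l _ => ?_
    simp only [hKWW, Matrix.of_apply]
    ring
  have hψG : ∀ j k : Fin m, ⟪ψ j, ψ k⟫ = M j k := by
    intro j k
    simp only [hψdef, htprod, hM, Matrix.hadamard_apply, hKA'A', Matrix.of_apply, hμ]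
  have hMsymm : ∀ j k, M k j = M j k := fun j k => by
    rw [← hψG, ← hψG, real_inner_comm]
  set c : ℝ := (m : ℝ) * η with hc
  -- stationarity: (M + cI) α = y'
  have hstat : (M + c • (1 : Matrix (Fin m) (Fin m) ℝ)) *ᵥ α = y' := by
    rcases Nat.eq_zero_or_pos m with hm | hm
    · subst hm; funext j; exact j.elim0
    · have hcpos : 0 < c := by
        have h0 : 0 < (m : ℝ) := by exact_mod_cast hm
        exact mul_pos h0 hη
      have hpd : (M + c • (1 : Matrix (Fin m) (Fin m) ℝ)).PosDef := by
        rw [Matrix.posDef_iff_dotProduct_mulVec]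
        constructor
        · ext j k
          simp only [Matrix.conjTranspose_apply, Matrix.add_apply, Matrix.smul_apply,
            Matrix.one_apply, star_trivial, hMsymm j k]
          rcases eq_or_ne j k with rfl | hjk
          · simp
          · simp [hjk, Ne.symm hjk]
        · intro x hx
          have hgram : x ⬝ᵥ (M *ᵥ x) = ⟪∑ j, x j • ψ j, ∑ k, x k • ψ k⟫ := by
            simp only [sum_inner, inner_sum, real_inner_smul_left, real_inner_smul_right,
              hψG, dotProduct, Matrix.mulVec, Finset.mul_sum]
            refine Finset.sum_congr rfl fun j _ => Finset.sum_congr rfl fun k _ => ?_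
            rw [hMsymm j k]
            ring
          have h1 : 0 ≤ x ⬝ᵥ (M *ᵥ x) := hgram ▸ real_inner_self_nonneg
          have h2 : 0 < x ⬝ᵥ x := by
            simpa using (Matrix.dotProduct_star_self_pos_iff (v := x)).mpr hx
          have h3 : x ⬝ᵥ ((M + c • (1 : Matrix (Fin m) (Fin m) ℝ)) *ᵥ x)
              = x ⬝ᵥ (M *ᵥ x) + c * (x ⬝ᵥ x) := by
            simp [Matrix.add_mulVec, Matrix.smul_mulVec, Matrix.one_mulVec,
              dotProduct_add, dotProduct_smul, smul_eq_mul]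
          rw [star_trivial, h3]
          positivity
      rw [hα, Matrix.mulVec_mulVec,
        Matrix.mul_nonsing_inv _ ((Matrix.isUnit_iff_isUnit_det _).mp hpd.isUnit),
        Matrix.one_mulVec]
  -- residual formula
  have hstat' : ∀ j, y' j - ⟪hhat, ψ j⟫ = c * α j := by
    intro j
    have h1 : ⟪hhat, ψ j⟫ = ∑ k, α k * M k j := by
      rw [hhat_def]
      simp only [sum_inner, real_inner_smul_left, hψG]
      exact Finset.sum_congr rfl fun k _ => congrArg (α k * ·) (hψG k j)
    have h2 := congrFun hstat j
    simp only [Matrix.mulVec, dotProduct, Matrix.add_apply, Matrix.smul_apply,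
      Matrix.one_apply, smul_eq_mul] at h2
    have h3 : ∑ k, α k * M k j = ∑ k, M j k * α k := by
      refine Finset.sum_congr rfl fun k _ => ?_
      rw [hMsymm j k]; ring
    have h4 : ∑ k, (M j k + c * (if j = k then (1:ℝ) else 0)) * α k
        = (∑ k, M j k * α k) + c * α j := by
      simp_rw [add_mul]
      rw [Finset.sum_add_distrib]
      congr 1
      rw [Finset.sum_eq_single j]
      · simp
      · intro k _ hk; simp [Ne.symm hk]
      · simp
    rw [h1, h3]
    rw [h4] at h2
    linarith
  -- the key cross-term identity
  have hkey : ∀ d : H,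
      (1 / (m : ℝ)) * ∑ j, (y' j - ⟪hhat, ψ j⟫) * ⟪d, ψ j⟫ = η * ⟪hhat, d⟫ := by
    intro d
    rcases Nat.eq_zero_or_pos m with hm | hm
    · subst hm
      have h0 : hhat = 0 := by simp [hhat_def]
      simp [h0]
    · have hm' : (m : ℝ) ≠ 0 := Nat.cast_ne_zero.mpr hm.ne'
      have hdh : ⟪d, hhat⟫ = ∑ j, α j * ⟪d, ψ j⟫ := by
        rw [hhat_def, inner_sum]
        simp only [real_inner_smul_right]
        rfl
      have hsum : ∑ j, (y' j - ⟪hhat, ψ j⟫) * ⟪d, ψ j⟫ = c * ⟪d, hhat⟫ := by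
        rw [hdh, Finset.mul_sum]
        refine Finset.sum_congr rfl fun j _ => ?_
        rw [hstat' j]
        ring
      rw [hsum, real_inner_comm d hhat, hc]
      field_simp
  -- the expansion of the objective around hhat
  have hexp : ∀ h : H, L h = L hhat
      + (1 / (m : ℝ)) * ∑ j, ⟪h - hhat, ψ j⟫ ^ 2 + η * ‖h - hhat‖ ^ 2 := by
    intro h
    have hdecomp : ∀ j, (y' j - ⟪h, ψ j⟫) ^ 2
        = (y' j - ⟪hhat, ψ j⟫) ^ 2 + ⟪h - hhat, ψ j⟫ ^ 2
          - 2 * ((y' j - ⟪hhat, ψ j⟫) * ⟪h - hhat, ψ j⟫) := by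
      intro j
      simp only [inner_sub_left]
      ring
    have hnorm : ‖h‖ ^ 2 = ‖hhat‖ ^ 2 + 2 * ⟪hhat, h - hhat⟫ + ‖h - hhat‖ ^ 2 := by
      have h0 := norm_add_sq_real hhat (h - hhat)
      rw [add_sub_cancel] at h0
      exact h0
    rw [hL]
    simp only
    rw [hnorm]
    simp only [hψdef] at hdecomp hkey ⊢
    simp only [hdecomp]
    rw [Finset.sum_sub_distrib, Finset.sum_add_distrib, ← Finset.mul_sum]
    linear_combination (-2 : ℝ) * hkey (h - hhat)
  refine ⟨?_, ?_, ?_⟩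
  · intro h
    rw [hexp h]
    have h1 : 0 ≤ (1 / (m : ℝ)) * ∑ j, ⟪h - hhat, ψ j⟫ ^ 2 := by
      apply mul_nonneg
      · positivity
      · exact Finset.sum_nonneg fun j _ => sq_nonneg _
    have h2 : 0 ≤ η * ‖h - hhat‖ ^ 2 := by positivity
    linarith
  · intro h hLh
    rw [hexp h] at hLh
    have h1 : 0 ≤ (1 / (m : ℝ)) * ∑ j, ⟪h - hhat, ψ j⟫ ^ 2 := by
      apply mul_nonneg
      · positivity
      · exact Finset.sum_nonneg fun j _ => sq_nonneg _
    have h2 : 0 ≤ ‖h - hhat‖ ^ 2 := sq_nonneg _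
    have h3 : ‖h - hhat‖ ^ 2 = 0 := by nlinarith
    have h4 : h - hhat = 0 := by
      rwa [pow_eq_zero_iff (by norm_num : 2 ≠ 0), norm_eq_zero] at h3
    exact sub_eq_zero.mp h4
  · intro a₀ w₀
    rw [hhat_def]
    simp only [sum_inner, real_inner_smul_left, htprod, dotProduct]
    refine Finset.sum_congr rfl fun j _ => ?_
    have hv : ⟪μhat j, φW w₀⟫
        = (Bᵀ *ᵥ fun i => ⟪φW (w i), φW w₀⟫) j := by
      rw [hμhat]
      simp only [sum_inner, real_inner_smul_left, Matrix.mulVec, dotProduct,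
        Matrix.transpose_apply]
    rw [hv]
end

section
/- (SPMMR closed form.) Fix samples {(aᵢ, wᵢ, yᵢ)}_{i=1}^n and η > 0. Let L = K_AA ⊙ K_WW and G = K_AA ⊙ K_YY ∈ ℝ^{n×n}; G is positive semidefinite, and let √G denote its positive semidefinite square root, so G = √G √G. Then the unique minimizer over h ∈ H of the objective (1/n²) Σ_{i,j=1}^n (yᵢ − ⟨h, Φ(aᵢ, wᵢ)⟩_H)(yⱼ − ⟨h, Φ(aⱼ, wⱼ)⟩_H) k_𝒜(aᵢ, aⱼ) k_𝒴(yᵢ, yⱼ) + η ‖h‖²_H is ĥ = Σ_{i=1}^n αᵢ Φ(aᵢ, wᵢ) with α = √G (√G L √G + n²ηI)^{-1} √G y, where y = (y₁, …, y_n)ᵀ; consequently ĥ(a, w) := ⟨ĥ, Φ(a, w)⟩_H = αᵀ k(a, w) with k(a, w) = (k_𝒜(aᵢ, a) k_𝒲(wᵢ, w))ᵢ ∈ ℝⁿ. -/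
open scoped Matrix RealInnerProductSpace
open Matrix

section OldSqrt
open scoped ComplexOrder

/-- The positive semidefinite square root, as defined in the older Mathlib
(`Matrix.PosSemidef.sqrt`, since removed). -/
noncomputable def Matrix.PosSemidef.sqrt {n 𝕜 : Type*} [Fintype n] [RCLike 𝕜] [DecidableEq n]
    {A : Matrix n n 𝕜} (hA : A.PosSemidef) : Matrix n n 𝕜 :=
  hA.1.eigenvectorUnitary.1 * diagonal ((↑) ∘ (√·) ∘ hA.1.eigenvalues) *
    (star hA.1.eigenvectorUnitary : Matrix n n 𝕜)

end OldSqrt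

lemma spmmr_sqrt_herm {n : ℕ} {A : Matrix (Fin n) (Fin n) ℝ} (hA : A.PosSemidef) :
    hA.sqrt.IsHermitian := by
  unfold Matrix.PosSemidef.sqrt
  have hD : (diagonal (RCLike.ofReal ∘ (fun x => √x) ∘ hA.1.eigenvalues) : Matrix (Fin n) (Fin n) ℝ).IsHermitian := by
    ext i j
    by_cases h : i = j
    · subst h; simp
    · simp [diagonal_apply, h, Ne.symm h]
  simp only [IsHermitian, conjTranspose_mul, star_eq_conjTranspose, conjTranspose_conjTranspose,
    Matrix.mul_assoc]
  rw [hD.eq]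

lemma spmmr_sqrt_aux {n : ℕ} (U D V E : Matrix (Fin n) (Fin n) ℝ) (hVU : V * U = 1)
    (hDE : D * D = E) : (U * D * V) * (U * D * V) = U * E * V := by
  calc (U * D * V) * (U * D * V) = U * D * (V * U) * D * V := by simp only [Matrix.mul_assoc]
    _ = U * E * V := by rw [hVU, Matrix.mul_one, ← hDE]; simp only [Matrix.mul_assoc]

lemma spmmr_sqrt_mul_self {n : ℕ} {A : Matrix (Fin n) (Fin n) ℝ} (hA : A.PosSemidef) :
    hA.sqrt * hA.sqrt = A := by
  have hsp := hA.1.spectral_theorem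
  rw [Unitary.conjStarAlgAut_apply] at hsp
  unfold Matrix.PosSemidef.sqrt
  conv_rhs => rw [hsp]
  refine spmmr_sqrt_aux _ _ _ _ (Unitary.coe_star_mul_self _) ?_
  rw [diagonal_mul_diagonal]
  congr 1
  funext i
  simp [Real.mul_self_sqrt (hA.eigenvalues_nonneg i)]

/-- Gram matrices are positive semidefinite. -/
lemma spmmr_gram_posSemidef {E : Type*} [NormedAddCommGroup E] [InnerProductSpace ℝ E]
    {n : ℕ} (v : Fin n → E) :
    (Matrix.of fun i j => (⟪v i, v j⟫ : ℝ)).PosSemidef := by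
  refine Matrix.PosSemidef.of_dotProduct_mulVec_nonneg ?_ ?_
  · ext i j
    simp [Matrix.conjTranspose_apply, real_inner_comm]
  · intro x
    have h : dotProduct (star x) ((Matrix.of fun i j => (⟪v i, v j⟫ : ℝ)) *ᵥ x)
        = ⟪∑ i, x i • v i, ∑ j, x j • v j⟫ := by
      rw [sum_inner]
      simp only [dotProduct, Matrix.mulVec, dotProduct, Matrix.of_apply,
        star_trivial, inner_sum, real_inner_smul_left, real_inner_smul_right]
      refine Finset.sum_congr rfl fun i _ => ?_
      rw [Finset.mul_sum]
      exact Finset.sum_congr rfl fun j _ => by ring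
    rw [h]
    exact real_inner_self_nonneg

private lemma spmmr_sumswap {n : ℕ} (f : Fin n → Fin n → Fin n → ℝ) :
    (∑ i, ∑ j, ∑ k, f i j k) = ∑ k, ∑ i, ∑ j, f i j k :=
  calc (∑ i, ∑ j, ∑ k, f i j k) = ∑ i, ∑ k, ∑ j, f i j k :=
        Finset.sum_congr rfl fun i _ => Finset.sum_comm
    _ = ∑ k, ∑ i, ∑ j, f i j k := Finset.sum_comm

/-- Schur product theorem for real PSD matrices. -/
lemma spmmr_hadamard_posSemidef {n : ℕ} {A B : Matrix (Fin n) (Fin n) ℝ}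
    (hA : A.PosSemidef) (hB : B.PosSemidef) : (A ⊙ B).PosSemidef := by
  refine Matrix.PosSemidef.of_dotProduct_mulVec_nonneg ?_ ?_
  · ext i j
    simp only [Matrix.conjTranspose_apply, Matrix.hadamard_apply, star_trivial]
    rw [← hA.1.apply i j, ← hB.1.apply i j]
    simp
  · intro x
    have hSsymm : ∀ i j, hA.sqrt i j = hA.sqrt j i := fun i j => by
      rw [← (spmmr_sqrt_herm hA).apply i j]; simp
    have hAS : ∀ i j, A i j = ∑ k, hA.sqrt k i * hA.sqrt k j := by
      intro i j
      have h0 : A i j = (hA.sqrt * hA.sqrt) i j := by rw [spmmr_sqrt_mul_self hA]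
      rw [h0, Matrix.mul_apply]
      exact Finset.sum_congr rfl fun k _ => by rw [hSsymm i k]
    have key : dotProduct (star x) ((A ⊙ B) *ᵥ x)
        = ∑ k, dotProduct (star fun i => x i * hA.sqrt k i)
            (B *ᵥ fun i => x i * hA.sqrt k i) := by
      calc dotProduct (star x) ((A ⊙ B) *ᵥ x)
          = ∑ i, ∑ j, ∑ k, x i * hA.sqrt k i * B i j * (x j * hA.sqrt k j) := by
            simp only [dotProduct, Matrix.mulVec, dotProduct,
              Matrix.hadamard_apply, star_trivial]
            refine Finset.sum_congr rfl fun i _ => ?_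
            rw [Finset.mul_sum]
            refine Finset.sum_congr rfl fun j _ => ?_
            rw [hAS i j, Finset.sum_mul, Finset.sum_mul, Finset.mul_sum]
            exact Finset.sum_congr rfl fun k _ => by ring
        _ = ∑ k, ∑ i, ∑ j, x i * hA.sqrt k i * B i j * (x j * hA.sqrt k j) :=
            spmmr_sumswap _
        _ = _ := by
            refine Finset.sum_congr rfl fun k _ => ?_
            simp only [dotProduct, Matrix.mulVec, dotProduct, star_trivial]
            refine Finset.sum_congr rfl fun i _ => ?_
            rw [Finset.mul_sum]
            exact Finset.sum_congr rfl fun j _ => by ring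
    rw [key]
    exact Finset.sum_nonneg fun k _ => hB.dotProduct_mulVec_nonneg _

/-- (SPMMR closed form.) With samples `(aᵢ, wᵢ, yᵢ)`, `L = K_AA ⊙ K_WW`,
`G = K_AA ⊙ K_YY`, the matrix `G` is positive semidefinite, and, writing `√G` for its
positive semidefinite square root, the unique minimizer over `h ∈ H` of
`(1/n²) Σᵢⱼ (yᵢ − ⟨h, Φ(aᵢ,wᵢ)⟩)(yⱼ − ⟨h, Φ(aⱼ,wⱼ)⟩) k_𝒜(aᵢ,aⱼ) k_𝒴(yᵢ,yⱼ) + η‖h‖²`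
is `ĥ = Σᵢ αᵢ Φ(aᵢ, wᵢ)` with `α = √G (√G L √G + n²ηI)⁻¹ √G y`; consequently
`⟨ĥ, Φ(a, w)⟩ = αᵀ k(a, w)` with `k(a,w)ᵢ = k_𝒜(aᵢ, a) k_𝒲(wᵢ, w)`. -/
theorem spmmr_closed_form
    {𝒜 𝒲 HA HW HY H : Type*}
    [NormedAddCommGroup HA] [InnerProductSpace ℝ HA]
    [NormedAddCommGroup HW] [InnerProductSpace ℝ HW]
    [NormedAddCommGroup HY] [InnerProductSpace ℝ HY]
    [NormedAddCommGroup H] [InnerProductSpace ℝ H] [CompleteSpace H]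
    (φA : 𝒜 → HA) (φW : 𝒲 → HW) (φY : ℝ → HY)
    -- H is (a model of) the Hilbert tensor product of HA and HW
    (tprod : HA →ₗ[ℝ] HW →ₗ[ℝ] H)
    (htprod : ∀ (u u' : HA) (v v' : HW), ⟪tprod u v, tprod u' v'⟫ = ⟪u, u'⟫ * ⟪v, v'⟫)
    {n : ℕ}
    (a : Fin n → 𝒜) (w : Fin n → 𝒲) (y : Fin n → ℝ)
    (η : ℝ) (hη : 0 < η)
    (KAA KWW KYY : Matrix (Fin n) (Fin n) ℝ)
    (hKAA : KAA = Matrix.of fun i j => ⟪φA (a i), φA (a j)⟫)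
    (hKWW : KWW = Matrix.of fun i j => ⟪φW (w i), φW (w j)⟫)
    (hKYY : KYY = Matrix.of fun i j => ⟪φY (y i), φY (y j)⟫)
    (Lmat G : Matrix (Fin n) (Fin n) ℝ)
    (hLmat : Lmat = KAA ⊙ KWW) (hG : G = KAA ⊙ KYY)
    -- the MMR objective
    (L : H → ℝ)
    (hL : L = fun h =>
      (1 / (n : ℝ) ^ 2) * (∑ i, ∑ j,
        (y i - ⟪h, tprod (φA (a i)) (φW (w i))⟫) * (y j - ⟪h, tprod (φA (a j)) (φW (w j))⟫)
          * ⟪φA (a i), φA (a j)⟫ * ⟪φY (y i), φY (y j)⟫)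
        + η * ‖h‖ ^ 2) :
    -- G is positive semidefinite, and the closed form holds with its psd square root √G
    ∃ hGpsd : G.PosSemidef,
      ∀ α : Fin n → ℝ,
        α = hGpsd.sqrt *ᵥ
            ((hGpsd.sqrt * Lmat * hGpsd.sqrt
                + ((n : ℝ) ^ 2 * η) • (1 : Matrix (Fin n) (Fin n) ℝ))⁻¹
              *ᵥ (hGpsd.sqrt *ᵥ y)) →
        ∀ hhat : H, hhat = ∑ i, α i • tprod (φA (a i)) (φW (w i)) →
          (∀ h : H, L hhat ≤ L h) ∧ (∀ h : H, L h = L hhat → h = hhat) ∧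
            ∀ (a₀ : 𝒜) (w₀ : 𝒲),
              ⟪hhat, tprod (φA a₀) (φW w₀)⟫
                = α ⬝ᵥ fun i => ⟪φA (a i), φA a₀⟫ * ⟪φW (w i), φW w₀⟫ := by
  have hKAApsd : KAA.PosSemidef := by rw [hKAA]; exact spmmr_gram_posSemidef _
  have hKWWpsd : KWW.PosSemidef := by rw [hKWW]; exact spmmr_gram_posSemidef _
  have hKYYpsd : KYY.PosSemidef := by rw [hKYY]; exact spmmr_gram_posSemidef _
  have hGpsd : G.PosSemidef := by rw [hG]; exact spmmr_hadamard_posSemidef hKAApsd hKYYpsd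
  have hLpsd : Lmat.PosSemidef := by rw [hLmat]; exact spmmr_hadamard_posSemidef hKAApsd hKWWpsd
  refine ⟨hGpsd, fun α hα hhat hhatdef => ?_⟩
  set c : ℝ := (n : ℝ) ^ 2 * η with hc
  set S : Matrix (Fin n) (Fin n) ℝ := hGpsd.sqrt with hSdef
  set M : Matrix (Fin n) (Fin n) ℝ := S * Lmat * S + c • (1 : Matrix (Fin n) (Fin n) ℝ)
    with hMdef
  -- S facts
  have hSherm : S.IsHermitian := spmmr_sqrt_herm hGpsd
  have hGS : G = S * S := (spmmr_sqrt_mul_self hGpsd).symm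
  -- M is positive definite, hence invertible
  have hSLS : (S * Lmat * S).PosSemidef := by
    have h1 : (Sᴴ * Lmat * S).PosSemidef := hLpsd.conjTranspose_mul_mul_same S
    rwa [hSherm] at h1
  have hMpd : M.PosDef := by
    refine Matrix.PosDef.of_dotProduct_mulVec_pos ?_ ?_
    · have h2 : (c • (1 : Matrix (Fin n) (Fin n) ℝ)).IsHermitian := by
        simp [Matrix.IsHermitian]
      exact hSLS.1.add h2
    · intro x hx
      have hxn : ∃ i, x i ≠ 0 := Function.ne_iff.mp hx
      have hn1 : (1 : ℝ) ≤ (n : ℝ) := by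
        obtain ⟨i, -⟩ := hxn
        exact_mod_cast Nat.one_le_iff_ne_zero.mpr (fun h => by subst h; exact i.elim0)
      have hcpos : 0 < c := by
        rw [hc]; exact mul_pos (pow_pos (by linarith) 2) hη
      have hsplit : dotProduct (star x) (M *ᵥ x)
          = dotProduct (star x) ((S * Lmat * S) *ᵥ x) + c * dotProduct (star x) x := by
        rw [hMdef, Matrix.add_mulVec, dotProduct_add, Matrix.smul_mulVec,
          Matrix.one_mulVec, dotProduct_smul, smul_eq_mul]
      rw [hsplit]
      have hxx : 0 < dotProduct (star x) x := dotProduct_star_self_pos_iff.mpr hx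
      have := hSLS.dotProduct_mulVec_nonneg x
      nlinarith
  have hMinv : M * M⁻¹ = 1 :=
    Matrix.mul_nonsing_inv _ ((Matrix.isUnit_iff_isUnit_det _).mp hMpd.isUnit)
  have hMz : M *ᵥ (M⁻¹ *ᵥ (S *ᵥ y)) = S *ᵥ y := by
    rw [Matrix.mulVec_mulVec, hMinv, Matrix.one_mulVec]
  -- the key vector identity
  have hGr : G *ᵥ (y - Lmat *ᵥ α) = c • α := by
    rw [hα]
    set z : Fin n → ℝ := M⁻¹ *ᵥ (S *ᵥ y) with hz
    rw [Matrix.mulVec_sub]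
    simp only [Matrix.mulVec_mulVec]
    have e2 : S *ᵥ y = (S * Lmat * S) *ᵥ z + c • z := by
      rw [← hMz, hMdef, Matrix.add_mulVec, Matrix.smul_mulVec, Matrix.one_mulVec]
    have e3 : G * (Lmat * S) = S * (S * Lmat * S) := by
      rw [hGS]; simp only [Matrix.mul_assoc]
    have e1 : G *ᵥ y = S *ᵥ (S *ᵥ y) := by rw [Matrix.mulVec_mulVec, ← hGS]
    rw [e1, e2, e3, Matrix.mulVec_add, Matrix.mulVec_smul]
    simp only [Matrix.mulVec_mulVec]
    abel
  -- inner product bookkeeping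
  set v : H → Fin n → ℝ := fun h i => ⟪h, tprod (φA (a i)) (φW (w i))⟫ with hv
  have hΦL : ∀ i j, (⟪tprod (φA (a i)) (φW (w i)), tprod (φA (a j)) (φW (w j))⟫ : ℝ)
      = Lmat i j := by
    intro i j
    rw [htprod, hLmat, hKAA, hKWW]
    simp [Matrix.hadamard_apply]
  have hLsymm : ∀ i j, Lmat i j = Lmat j i := fun i j => by
    rw [← hLpsd.1.apply i j]; simp
  have hhat_inner : ∀ u : H, ⟪hhat, u⟫
      = ∑ i, α i * ⟪u, tprod (φA (a i)) (φW (w i))⟫ := by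
    intro u
    rw [hhatdef, sum_inner]
    exact Finset.sum_congr rfl fun i _ => by
      rw [real_inner_smul_left, real_inner_comm]
  have hvhat : ∀ j, v hhat j = (Lmat *ᵥ α) j := by
    intro j
    show (⟪hhat, tprod (φA (a j)) (φW (w j))⟫ : ℝ) = _
    rw [hhat_inner]
    simp only [Matrix.mulVec, dotProduct]
    exact Finset.sum_congr rfl fun i _ => by rw [hΦL j i]; ring
  -- quadratic form facts
  have hGsymm : ∀ i j, G i j = G j i := fun i j => by
    rw [← hGpsd.1.apply i j]; simp
  have hQnonneg : ∀ u : Fin n → ℝ, 0 ≤ u ⬝ᵥ (G *ᵥ u) := fun u => by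
    simpa using hGpsd.dotProduct_mulVec_nonneg u
  have hQcross : ∀ u u' : Fin n → ℝ, u ⬝ᵥ (G *ᵥ u') = u' ⬝ᵥ (G *ᵥ u) := by
    intro u u'
    simp only [dotProduct, Matrix.mulVec, Finset.mul_sum]
    rw [Finset.sum_comm]
    exact Finset.sum_congr rfl fun i _ => Finset.sum_congr rfl fun j _ => by
      rw [hGsymm i j]; ring
  have hQexp : ∀ u u' : Fin n → ℝ, (u - u') ⬝ᵥ (G *ᵥ (u - u'))
      = u ⬝ᵥ (G *ᵥ u) - 2 * (u' ⬝ᵥ (G *ᵥ u)) + u' ⬝ᵥ (G *ᵥ u') := by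
    intro u u'
    rw [Matrix.mulVec_sub, dotProduct_sub, sub_dotProduct,
      sub_dotProduct, hQcross u u']
    ring
  -- L in vector form
  have hLform : ∀ h : H, L h
      = (1 / (n : ℝ) ^ 2) * ((y - v h) ⬝ᵥ (G *ᵥ (y - v h))) + η * ‖h‖ ^ 2 := by
    intro h
    rw [hL]
    dsimp only
    congr 1
    congr 1
    simp only [dotProduct, Matrix.mulVec, hG, hKAA, hKYY, Matrix.hadamard_apply,
      Matrix.of_apply, Pi.sub_apply, hv]
    refine Finset.sum_congr rfl fun i _ => ?_
    rw [Finset.mul_sum]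
    exact Finset.sum_congr rfl fun j _ => by ring
  -- the residual at hhat
  have hGr' : G *ᵥ (y - v hhat) = c • α := by
    have h1 : y - v hhat = y - Lmat *ᵥ α := by
      funext i; simp only [Pi.sub_apply, hvhat i]
    rw [h1]; exact hGr
  -- cross term identity
  have hcross2 : ∀ h : H,
      (1 / (n : ℝ) ^ 2) * ((v h - v hhat) ⬝ᵥ (c • α)) = η * ⟪hhat, h - hhat⟫ := by
    intro h
    have hinner : (⟪hhat, h - hhat⟫ : ℝ) = α ⬝ᵥ (v h - v hhat) := by
      rw [hhat_inner]
      simp only [dotProduct, Pi.sub_apply, hv]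
      exact Finset.sum_congr rfl fun i _ => by rw [inner_sub_left]
    rcases Nat.eq_zero_or_pos n with hn | hn
    · have hemp : IsEmpty (Fin n) := by rw [hn]; exact Fin.isEmpty'
      rw [hinner]
      simp [dotProduct, Finset.univ_eq_empty]
    · have hn0 : ((n : ℝ) ^ 2) ≠ 0 := by positivity
      rw [hinner, dotProduct_smul, smul_eq_mul, dotProduct_comm, hc]
      field_simp
  -- master identity
  have master : ∀ h : H, L h = L hhat
      + ((1 / (n : ℝ) ^ 2) * ((v h - v hhat) ⬝ᵥ (G *ᵥ (v h - v hhat)))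
        + η * ‖h - hhat‖ ^ 2) := by
    intro h
    have hsub : y - v h = (y - v hhat) - (v h - v hhat) := by abel
    have hnorm : ‖h‖ ^ 2 = ‖hhat‖ ^ 2 + 2 * ⟪hhat, h - hhat⟫ + ‖h - hhat‖ ^ 2 := by
      have h2 : hhat + (h - hhat) = h := by abel
      have h3 := norm_add_sq_real hhat (h - hhat)
      rw [h2] at h3
      exact h3
    rw [hLform h, hLform hhat, hsub, hQexp, hGr', hnorm]
    linear_combination (-2 : ℝ) * hcross2 h
  refine ⟨?_, ?_, ?_⟩
  · intro h
    rw [master h]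
    have h1 : 0 ≤ (1 / (n : ℝ) ^ 2) * ((v h - v hhat) ⬝ᵥ (G *ᵥ (v h - v hhat))) :=
      mul_nonneg (by positivity) (hQnonneg _)
    have h2 : (0 : ℝ) ≤ η * ‖h - hhat‖ ^ 2 := by positivity
    linarith
  · intro h hLh
    rw [master h] at hLh
    have h1 : 0 ≤ (1 / (n : ℝ) ^ 2) * ((v h - v hhat) ⬝ᵥ (G *ᵥ (v h - v hhat))) :=
      mul_nonneg (by positivity) (hQnonneg _)
    have h2 : (0 : ℝ) ≤ η * ‖h - hhat‖ ^ 2 := by positivity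
    have h3 : η * ‖h - hhat‖ ^ 2 = 0 := by linarith
    have h4 : ‖h - hhat‖ ^ 2 = 0 := by
      rcases mul_eq_zero.mp h3 with h | h
      · exact absurd h hη.ne'
      · exact h
    have h5 : h - hhat = 0 := by
      rw [← norm_eq_zero]
      exact pow_eq_zero_iff (n := 2) (by norm_num) |>.mp h4
    rw [sub_eq_zero] at h5
    exact h5
  · intro a₀ w₀
    rw [hhat_inner]
    simp only [dotProduct]
    refine Finset.sum_congr rfl fun i _ => ?_
    rw [htprod, real_inner_comm (φA a₀), real_inner_comm (φW w₀)]
end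

section
/- (Population MMR closed form.) Let (A, Y, W) be random variables such that ε := Y − h(A, W) is square-integrable for a measurable h : 𝒜 × 𝒲 → ℝ, and suppose the kernels k_𝒜, k_𝒴 are bounded. Then the supremum over g in the closed unit ball of G of (E[(Y − h(A, W)) ⟨g, Ψ(A, Y)⟩_G])² equals E[(Y − h(A, W))(Y' − h(A', W')) k_𝒜(A, A') k_𝒴(Y, Y')], where (A', Y', W') is an independent copy of (A, Y, W); moreover the supremum equals ‖E[(Y − h(A, W)) Ψ(A, Y)]‖²_G (Bochner expectation). -/
open MeasureTheory
open scoped RealInnerProductSpace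

/-- (Population MMR closed form.) If `ε = Y − h(A,W)` is square-integrable
and the kernels `k_𝒜`, `k_𝒴` are bounded, then
`sup_{‖g‖ ≤ 1} (E[(Y − h(A,W)) ⟨g, Ψ(A,Y)⟩])²
  = E[(Y − h(A,W))(Y' − h(A',W')) k_𝒜(A,A') k_𝒴(Y,Y')]`
for an independent copy `(A',Y',W')`, and the supremum also equals
`‖E[(Y − h(A,W)) Ψ(A,Y)]‖²` (Bochner expectation), where `Ψ(a,y) = φ_𝒜(a) ⊗ φ_𝒴(y)`. -/
theorem population_mmr_closed_form
    {Ω 𝒜 𝒲 HA HY G : Type*} [MeasurableSpace Ω]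
    [MeasurableSpace 𝒜] [MeasurableSpace 𝒲]
    [NormedAddCommGroup HA] [InnerProductSpace ℝ HA]
    [NormedAddCommGroup HY] [InnerProductSpace ℝ HY]
    [NormedAddCommGroup G] [InnerProductSpace ℝ G] [CompleteSpace G]
    (P : Measure Ω) [IsProbabilityMeasure P]
    (φA : 𝒜 → HA) (φY : ℝ → HY)
    -- G is (a model of) the Hilbert tensor product of HA and HY
    (tprod : HA →ₗ[ℝ] HY →ₗ[ℝ] G)
    (htprod : ∀ (u u' : HA) (v v' : HY), ⟪tprod u v, tprod u' v'⟫ = ⟪u, u'⟫ * ⟪v, v'⟫)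
    (A : Ω → 𝒜) (Y : Ω → ℝ) (W : Ω → 𝒲)
    (hA : Measurable A) (hY : Measurable Y) (hW : Measurable W)
    (h : 𝒜 × 𝒲 → ℝ) (hh : Measurable h)
    -- ε = Y − h(A, W) is square-integrable
    (hε : MemLp (fun ω => Y ω - h (A ω, W ω)) 2 P)
    -- bounded kernels
    (hkA : ∃ C : ℝ, ∀ a a' : 𝒜, |⟪φA a, φA a'⟫| ≤ C)
    (hkY : ∃ C : ℝ, ∀ y y' : ℝ, |⟪φY y, φY y'⟫| ≤ C)
    -- Ψ(A, Y) is (a.e.) strongly measurable, so that the Bochner expectations make sense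
    (hΨ : AEStronglyMeasurable (fun ω => tprod (φA (A ω)) (φY (Y ω))) P) :
    (sSup {r : ℝ | ∃ g : G, ‖g‖ ≤ 1 ∧
        r = (∫ ω, (Y ω - h (A ω, W ω)) * ⟪g, tprod (φA (A ω)) (φY (Y ω))⟫ ∂P) ^ 2}
      = ∫ ω, ∫ ω', (Y ω - h (A ω, W ω)) * (Y ω' - h (A ω', W ω'))
          * ⟪φA (A ω), φA (A ω')⟫ * ⟪φY (Y ω), φY (Y ω')⟫ ∂P ∂P)
    ∧ (sSup {r : ℝ | ∃ g : G, ‖g‖ ≤ 1 ∧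
        r = (∫ ω, (Y ω - h (A ω, W ω)) * ⟪g, tprod (φA (A ω)) (φY (Y ω))⟫ ∂P) ^ 2}
      = ‖∫ ω, (Y ω - h (A ω, W ω)) • tprod (φA (A ω)) (φY (Y ω)) ∂P‖ ^ 2) := by
  set ε : Ω → ℝ := fun ω => Y ω - h (A ω, W ω) with hεdef
  set f : Ω → G := fun ω => tprod (φA (A ω)) (φY (Y ω)) with hfdef
  obtain ⟨CA, hCA⟩ := hkA
  obtain ⟨CY, hCY⟩ := hkY
  set M : ℝ := Real.sqrt (CA * CY) with hMdef
  have hM0 : 0 ≤ M := Real.sqrt_nonneg _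
  have hfb : ∀ ω, ‖f ω‖ ≤ M := by
    intro ω
    have h1 : ‖f ω‖ ^ 2 = ⟪φA (A ω), φA (A ω)⟫ * ⟪φY (Y ω), φY (Y ω)⟫ := by
      rw [← real_inner_self_eq_norm_sq]; exact htprod _ _ _ _
    have h2 : ‖f ω‖ ^ 2 ≤ CA * CY := by
      rw [h1]
      calc ⟪φA (A ω), φA (A ω)⟫ * ⟪φY (Y ω), φY (Y ω)⟫
          ≤ |⟪φA (A ω), φA (A ω)⟫ * ⟪φY (Y ω), φY (Y ω)⟫| := le_abs_self _
        _ = |⟪φA (A ω), φA (A ω)⟫| * |⟪φY (Y ω), φY (Y ω)⟫| := abs_mul _ _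
        _ ≤ CA * CY := by
            have := hCA (A ω) (A ω); have := hCY (Y ω) (Y ω)
            have h0 : (0:ℝ) ≤ |⟪φA (A ω), φA (A ω)⟫| := abs_nonneg _
            have h0' : (0:ℝ) ≤ |⟪φY (Y ω), φY (Y ω)⟫| := abs_nonneg _
            nlinarith
    nlinarith [Real.sq_sqrt (le_trans (by positivity : (0:ℝ) ≤ ‖f ω‖ ^ 2) h2),
      norm_nonneg (f ω), Real.sqrt_nonneg (CA * CY)]
  have hεint : Integrable ε P := hε.integrable one_le_two
  have hεf : Integrable (fun ω => ε ω • f ω) P := by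
    refine Integrable.mono' (hεint.abs.const_mul M)
      (hε.aestronglyMeasurable.smul hΨ) ?_
    filter_upwards with ω
    rw [norm_smul]
    calc ‖ε ω‖ * ‖f ω‖ ≤ ‖ε ω‖ * M := by
          exact mul_le_mul_of_nonneg_left (hfb ω) (norm_nonneg _)
      _ = M * |ε ω| := by rw [Real.norm_eq_abs]; ring
  set μ : G := ∫ ω, ε ω • f ω ∂P with hμdef
  have hswap : ∀ c : G, ⟪c, μ⟫ = ∫ ω, ε ω * ⟪c, f ω⟫ ∂P := by
    intro c
    have h0 : (innerSL ℝ c) μ = ∫ ω, (innerSL ℝ c) (ε ω • f ω) ∂P :=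
      ((innerSL ℝ c).integral_comp_comm hεf).symm
    simp only [innerSL_apply_apply, real_inner_smul_right] at h0
    exact h0
  -- the integral in the sup set equals ⟪g, μ⟫
  have hlin : ∀ g : G, (∫ ω, ε ω * ⟪g, f ω⟫ ∂P) = ⟪g, μ⟫ := fun g => (hswap g).symm
  -- the sup set
  have hset : {r : ℝ | ∃ g : G, ‖g‖ ≤ 1 ∧
      r = (∫ ω, ε ω * ⟪g, f ω⟫ ∂P) ^ 2} = {r : ℝ | ∃ g : G, ‖g‖ ≤ 1 ∧ r = ⟪g, μ⟫ ^ 2} := by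
    ext r
    simp only [Set.mem_setOf_eq]
    constructor
    · rintro ⟨g, hg, rfl⟩; exact ⟨g, hg, by rw [hlin]⟩
    · rintro ⟨g, hg, rfl⟩; exact ⟨g, hg, by rw [hlin]⟩
  have hub : ∀ g : G, ‖g‖ ≤ 1 → ⟪g, μ⟫ ^ 2 ≤ ‖μ‖ ^ 2 := by
    intro g hg
    have hcs : |⟪g, μ⟫| ≤ ‖g‖ * ‖μ‖ := abs_real_inner_le_norm g μ
    have h1 : ⟪g, μ⟫ ^ 2 ≤ (‖g‖ * ‖μ‖) ^ 2 := by
      rw [← sq_abs]; exact pow_le_pow_left₀ (abs_nonneg _) hcs 2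
    have h2 : ‖g‖ ^ 2 ≤ 1 := by nlinarith [norm_nonneg g]
    nlinarith [sq_nonneg ‖μ‖, norm_nonneg g, norm_nonneg μ]
  have hsup : sSup {r : ℝ | ∃ g : G, ‖g‖ ≤ 1 ∧ r = ⟪g, μ⟫ ^ 2} = ‖μ‖ ^ 2 := by
    apply le_antisymm
    · refine csSup_le ⟨(0:ℝ), ⟨0, by simp, by simp⟩⟩ ?_
      rintro r ⟨g, hg, rfl⟩
      exact hub g hg
    · apply le_csSup
      · refine ⟨‖μ‖ ^ 2, ?_⟩
        rintro r ⟨g, hg, rfl⟩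
        exact hub g hg
      · by_cases hμ0 : μ = 0
        · exact ⟨0, by simp, by simp [hμ0]⟩
        · refine ⟨‖μ‖⁻¹ • μ, ?_, ?_⟩
          · rw [norm_smul, norm_inv, norm_norm,
              inv_mul_cancel₀ (norm_ne_zero_iff.mpr hμ0)]
          · rw [real_inner_smul_left, real_inner_self_eq_norm_sq]
            have hn : ‖μ‖ ≠ 0 := norm_ne_zero_iff.mpr hμ0
            field_simp
  -- norm squared as double integral
  have hdouble : ‖μ‖ ^ 2 = ∫ ω, ∫ ω', ε ω * ε ω'
      * ⟪φA (A ω), φA (A ω')⟫ * ⟪φY (Y ω), φY (Y ω')⟫ ∂P ∂P := by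
    have hfm : ∀ ω, ⟪f ω, μ⟫ = ∫ ω', ε ω' * (⟪φA (A ω), φA (A ω')⟫
        * ⟪φY (Y ω), φY (Y ω')⟫) ∂P := by
      intro ω
      rw [hswap (f ω)]
      congr 1; ext ω'
      rw [hfdef]; rw [htprod]
    have h1 : ⟪μ, μ⟫ = ∫ ω, ε ω * ⟪μ, f ω⟫ ∂P := hswap μ
    rw [← real_inner_self_eq_norm_sq, h1]
    congr 1; ext ω
    rw [real_inner_comm, hfm ω, ← integral_const_mul]
    congr 1; ext ω'
    ring
  rw [hset]
  exact ⟨hsup.trans hdouble, hsup⟩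
end
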